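/- Let S be an inverse semigroup with zero. The map F ↦ F^u = {A ∈ D(S) : A ∩ F ≠ ∅} is an order isomorphism from the poset of proper filters of S (ordered by inclusion) onto the poset of prime filters of D(S), with inverse P ↦ P^d = {s ∈ S : s↓ ∈ P}. -/

import Mathlib

/-- An inverse semigroup: every element has a unique (generalized) inverse. -/
class InverseSemigroup (S : Type*) extends Semigroup S, Inv S where
  mul_inv_mul : ∀ s : S, s * s⁻¹ * s = s
  inv_mul_inv : ∀ s : S, s⁻¹ * s * s⁻¹ = s⁻¹
  inv_unique : ∀ s t : S, s * t * s = s → t * s * t = t → t = s⁻¹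

/-- An inverse semigroup with a zero element. -/
class InverseSemigroupWithZero (S : Type*) extends InverseSemigroup S, Zero S where
  zero_mul : ∀ s : S, 0 * s = 0
  mul_zero : ∀ s : S, s * 0 = 0

section Defs
variable {S : Type*}

/-- The natural partial order on an inverse semigroup: `a ≤ b` iff `a = b (a⁻¹ a)`. -/
def nle [InverseSemigroup S] (a b : S) : Prop := a = b * (a⁻¹ * a)

/-- Compatibility: `a⁻¹ b` and `a b⁻¹` are both idempotent. -/
def compat [InverseSemigroup S] (a b : S) : Prop :=
  IsIdempotentElem (a⁻¹ * b) ∧ IsIdempotentElem (a * b⁻¹)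

/-- Orthogonality: `a⁻¹ b = 0 = a b⁻¹`. -/
def orth [InverseSemigroupWithZero S] (a b : S) : Prop := a⁻¹ * b = 0 ∧ a * b⁻¹ = 0

/-- `u` is the least upper bound (join) of `a` and `b` in the natural partial order. -/
def isJoin [InverseSemigroup S] (u a b : S) : Prop :=
  nle a u ∧ nle b u ∧ ∀ c, nle a c → nle b c → nle u c

/-- `m` is the greatest lower bound (meet) of `a` and `b` in the natural partial order. -/
def isMeet [InverseSemigroup S] (m a b : S) : Prop :=
  nle m a ∧ nle m b ∧ ∀ c, nle c a → nle c b → nle c m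

/-- `c = a ∖ b`: `c ≤ a`, `c ⊥ b` and `a = b ∨ c`. -/
def isDiff [InverseSemigroupWithZero S] (c a b : S) : Prop :=
  nle c a ∧ orth c b ∧ isJoin a b c

end Defs

/-- A distributive inverse semigroup: compatible pairs have joins, and
multiplication distributes over such joins. -/
class DistributiveInverseSemigroup (S : Type*) extends InverseSemigroupWithZero S where
  join_exists : ∀ a b : S, compat a b → ∃ u, isJoin u a b
  mul_join_left : ∀ a b u c : S, isJoin u a b → isJoin (c * u) (c * a) (c * b)
  mul_join_right : ∀ a b u c : S, isJoin u a b → isJoin (u * c) (a * c) (b * c)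

/-- A Boolean inverse semigroup: a distributive inverse semigroup whose idempotents
form a (generalized) Boolean algebra, i.e. relative complements of idempotents exist. -/
class BooleanInverseSemigroup (S : Type*) extends DistributiveInverseSemigroup S where
  relcomp : ∀ e f : S, IsIdempotentElem e → IsIdempotentElem f → nle f e →
    ∃ c, IsIdempotentElem c ∧ isDiff c e f

section Stmt10
variable {S : Type*} [InverseSemigroupWithZero S]

/-- A finitely generated compatible order ideal of `S`: the downward closure of a
finite pairwise-compatible set (an element of `D(S)`). -/
def IsFGIdeal (A : Set S) : Prop :=
  ∃ F : Finset S, (∀ a ∈ F, ∀ b ∈ F, compat a b) ∧ A = {x : S | ∃ a ∈ F, nle x a}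

/-- A proper filter of `S`: nonempty, omits `0`, upward closed, downward directed. -/
def IsProperFilter (F : Set S) : Prop :=
  F.Nonempty ∧ (0 : S) ∉ F ∧ (∀ a ∈ F, ∀ b : S, nle a b → b ∈ F) ∧
    ∀ a ∈ F, ∀ b ∈ F, ∃ c ∈ F, nle c a ∧ nle c b

/-- A prime filter of `D(S)`: a nonempty proper (omitting the zero ideal `{0}`)
upward-closed downward-directed set of finitely generated compatible order ideals,
such that `A ∪ B ∈ P` implies `A ∈ P` or `B ∈ P`. -/
def IsPrimeFilterD (P : Set (Set S)) : Prop :=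
  (∀ A ∈ P, IsFGIdeal A) ∧ P.Nonempty ∧ ({(0 : S)} : Set S) ∉ P ∧
    (∀ A ∈ P, ∀ B : Set S, IsFGIdeal B → A ⊆ B → B ∈ P) ∧
    (∀ A ∈ P, ∀ B ∈ P, ∃ C ∈ P, C ⊆ A ∧ C ⊆ B) ∧
    ∀ A B : Set S, IsFGIdeal A → IsFGIdeal B → A ∪ B ∈ P → A ∈ P ∨ B ∈ P

/-- `F ↦ Fᵘ = {A ∈ D(S) : A ∩ F ≠ ∅}`. -/
def uMap (F : Set S) : Set (Set S) := {A : Set S | IsFGIdeal A ∧ (A ∩ F).Nonempty}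

/-- `P ↦ Pᵈ = {s ∈ S : s↓ ∈ P}`. -/
def dMap (P : Set (Set S)) : Set S := {s : S | {x : S | nle x s} ∈ P}

end Stmt10

/-!
A prime filter `P` of `D(S)` is determined by the principal ideals `s↓` it contains: every
`A = {a₁, …, aₘ}↓ ∈ P` is the join `a₁↓ ∪ ⋯ ∪ aₘ↓`, so by primeness some `aᵢ↓` lies in `P`.
Hence `Pᵈ` is a proper filter, `(Pᵈ)ᵘ = P`, and the remaining identities are direct from
the definitions once the natural partial order is known to be transitive, which rests on
idempotents of an inverse semigroup commuting.
-/

namespace InverseSemigroup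

variable {S : Type*} [InverseSemigroup S]

lemma inv_inv (a : S) : a⁻¹⁻¹ = a :=
  (inv_unique a⁻¹ a (inv_mul_inv a) (mul_inv_mul a)).symm

lemma _root_.IsIdempotentElem.inv_eq_self {e : S} (he : IsIdempotentElem e) : e⁻¹ = e :=
  (inv_unique e e (by rw [he, he]) (by rw [he, he])).symm

lemma isIdempotentElem_inv_mul_self (a : S) : IsIdempotentElem (a⁻¹ * a) := by
  rw [IsIdempotentElem, ← mul_assoc, inv_mul_inv]

lemma isIdempotentElem_mul_inv_self (a : S) : IsIdempotentElem (a * a⁻¹) := by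
  rw [IsIdempotentElem, ← mul_assoc, mul_inv_mul]

/-- `f (ef)⁻¹ e` is also an inverse of `ef`, so equals `(ef)⁻¹`, which makes `(ef)⁻¹`
idempotent, hence self-inverse. -/
lemma isIdempotentElem_mul {e f : S} (he : IsIdempotentElem e) (hf : IsIdempotentElem f) :
    IsIdempotentElem (e * f) := by
  have hfxe : f * (e * f)⁻¹ * e = (e * f)⁻¹ := by
    refine inv_unique (e * f) (f * (e * f)⁻¹ * e) ?_ ?_
    · calc e * f * (f * (e * f)⁻¹ * e) * (e * f) = e * f * (e * f)⁻¹ * (e * f) := by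
            simp only [mul_assoc, hf.mul_self_mul, he.mul_self_mul]
        _ = e * f := mul_inv_mul _
    · calc f * (e * f)⁻¹ * e * (e * f) * (f * (e * f)⁻¹ * e)
          = f * ((e * f)⁻¹ * (e * f) * (e * f)⁻¹) * e := by
            simp only [mul_assoc, hf.mul_self_mul, he.mul_self_mul]
        _ = f * (e * f)⁻¹ * e := by rw [inv_mul_inv]
  have hinv : IsIdempotentElem (e * f)⁻¹ := by
    calc (e * f)⁻¹ * (e * f)⁻¹ = f * (e * f)⁻¹ * e * (f * (e * f)⁻¹ * e) := by rw [hfxe]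
      _ = f * ((e * f)⁻¹ * (e * f) * (e * f)⁻¹) * e := by simp only [mul_assoc]
      _ = (e * f)⁻¹ := by rw [inv_mul_inv, hfxe]
  rwa [← InverseSemigroup.inv_inv (e * f), hinv.inv_eq_self]

lemma commute_of_isIdempotentElem {e f : S} (he : IsIdempotentElem e)
    (hf : IsIdempotentElem f) : Commute e f := by
  have hef := isIdempotentElem_mul he hf
  have hfe : f * e = (e * f)⁻¹ := by
    refine inv_unique (e * f) (f * e) ?_ ?_
    · calc e * f * (f * e) * (e * f) = e * f * (e * f) := by
            simp only [mul_assoc, hf.mul_self_mul, he.mul_self_mul]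
        _ = e * f := hef
    · calc f * e * (e * f) * (f * e) = f * e * (f * e) := by
            simp only [mul_assoc, hf.mul_self_mul, he.mul_self_mul]
        _ = f * e := isIdempotentElem_mul hf he
  exact (hfe.trans hef.inv_eq_self).symm

lemma mul_inv_rev (a b : S) : (a * b)⁻¹ = b⁻¹ * a⁻¹ := by
  have hcomm := commute_of_isIdempotentElem (isIdempotentElem_inv_mul_self a)
    (isIdempotentElem_mul_inv_self b)
  refine (inv_unique (a * b) (b⁻¹ * a⁻¹) ?_ ?_).symm
  · calc a * b * (b⁻¹ * a⁻¹) * (a * b) = a * ((b * b⁻¹) * (a⁻¹ * a)) * b := by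
          simp only [mul_assoc]
      _ = a * a⁻¹ * a * (b * b⁻¹ * b) := by rw [← hcomm.eq]; simp only [mul_assoc]
      _ = a * b := by rw [mul_inv_mul, mul_inv_mul]
  · calc b⁻¹ * a⁻¹ * (a * b) * (b⁻¹ * a⁻¹) = b⁻¹ * ((a⁻¹ * a) * (b * b⁻¹)) * a⁻¹ := by
          simp only [mul_assoc]
      _ = b⁻¹ * b * b⁻¹ * (a⁻¹ * a * a⁻¹) := by rw [hcomm.eq]; simp only [mul_assoc]
      _ = b⁻¹ * a⁻¹ := by rw [inv_mul_inv, inv_mul_inv]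

end InverseSemigroup

open InverseSemigroup

section NaturalOrder

variable {S : Type*} [InverseSemigroup S]

lemma nle_refl (a : S) : nle a a := by
  rw [nle, ← mul_assoc, InverseSemigroup.mul_inv_mul]

lemma nle_mul_of_isIdempotentElem {e : S} (he : IsIdempotentElem e) (b : S) :
    nle (b * e) b := by
  rw [nle, InverseSemigroup.mul_inv_rev, he.inv_eq_self]
  calc b * e = b * b⁻¹ * b * (e * e) := by rw [InverseSemigroup.mul_inv_mul, he]
    _ = b * ((b⁻¹ * b) * e * e) := by simp only [mul_assoc]
    _ = b * (e * (b⁻¹ * b) * e) := by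
        rw [(commute_of_isIdempotentElem (isIdempotentElem_inv_mul_self b) he).eq]
    _ = b * (e * b⁻¹ * (b * e)) := by simp only [mul_assoc]

lemma nle_trans {a b c : S} (hab : nle a b) (hbc : nle b c) : nle a c := by
  have ha : a = c * ((b⁻¹ * b) * (a⁻¹ * a)) := by rw [← mul_assoc, ← hbc, ← hab]
  rw [ha]
  exact nle_mul_of_isIdempotentElem
    (isIdempotentElem_mul (isIdempotentElem_inv_mul_self b) (isIdempotentElem_inv_mul_self a)) c

lemma compat_self (a : S) : compat a a :=
  ⟨isIdempotentElem_inv_mul_self a, isIdempotentElem_mul_inv_self a⟩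

/-- The principal order ideal `a↓`. -/
def principalIdeal (a : S) : Set S := {x | nle x a}

@[simp]
lemma mem_principalIdeal {a x : S} : x ∈ principalIdeal a ↔ nle x a := Iff.rfl

lemma self_mem_principalIdeal (a : S) : a ∈ principalIdeal a := nle_refl a

lemma principalIdeal_mono {a b : S} (hab : nle a b) : principalIdeal a ⊆ principalIdeal b :=
  fun _ hx => nle_trans hx hab

end NaturalOrder

section WithZero

variable {S : Type*} [InverseSemigroupWithZero S]

lemma nle_zero_iff {x : S} : nle x 0 ↔ x = 0 := by
  refine ⟨fun h => ?_, by rintro rfl; exact nle_refl 0⟩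
  rw [h, ← mul_assoc, InverseSemigroupWithZero.zero_mul, InverseSemigroupWithZero.zero_mul]

lemma principalIdeal_zero : principalIdeal (0 : S) = {0} := by
  ext x
  simp [nle_zero_iff]

lemma isFGIdeal_principalIdeal (a : S) : IsFGIdeal (principalIdeal a) :=
  ⟨{a}, by simp [compat_self], by ext; simp⟩

lemma IsFGIdeal.principalIdeal_subset {A : Set S} (hA : IsFGIdeal A) {a : S} (ha : a ∈ A) :
    principalIdeal a ⊆ A := by
  obtain ⟨F, -, rfl⟩ := hA
  obtain ⟨b, hb, hab⟩ := ha
  exact fun x hxa => ⟨b, hb, nle_trans hxa hab⟩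

lemma IsProperFilter.mem_of_nle {F : Set S} (hF : IsProperFilter F) {a b : S} (ha : a ∈ F)
    (hab : nle a b) : b ∈ F :=
  hF.2.2.1 a ha b hab

namespace IsPrimeFilterD

variable {P : Set (Set S)}

lemma exists_principalIdeal_mem_of_generators (hP : IsPrimeFilterD P) {F : Finset S}
    (hcompat : ∀ a ∈ F, ∀ b ∈ F, compat a b) (hF : {x : S | ∃ a ∈ F, nle x a} ∈ P) :
    ∃ a ∈ F, principalIdeal a ∈ P := by
  classical
  obtain ⟨-, -, hzero, hup, -, hprime⟩ := hP
  induction F using Finset.induction_on with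
  | empty =>
    refine absurd (hup _ hF _ (principalIdeal_zero (S := S) ▸ isFGIdeal_principalIdeal 0) ?_) hzero
    simp
  | insert a F _ ih =>
    have hcompat' : ∀ b ∈ F, ∀ c ∈ F, compat b c := fun b hb c hc =>
      hcompat b (Finset.mem_insert_of_mem hb) c (Finset.mem_insert_of_mem hc)
    have hsplit : {x : S | ∃ b ∈ insert a F, nle x b} =
        principalIdeal a ∪ {x : S | ∃ b ∈ F, nle x b} := by
      ext x
      simp [or_and_right, exists_or]
    rw [hsplit] at hF
    rcases hprime _ _ (isFGIdeal_principalIdeal a) ⟨F, hcompat', rfl⟩ hF with ha | hF'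
    · exact ⟨a, Finset.mem_insert_self a F, ha⟩
    · obtain ⟨b, hb, hbP⟩ := ih hcompat' hF'
      exact ⟨b, Finset.mem_insert_of_mem hb, hbP⟩

lemma exists_principalIdeal_mem (hP : IsPrimeFilterD P) {A : Set S} (hA : A ∈ P) :
    ∃ a ∈ A, principalIdeal a ∈ P := by
  obtain ⟨F, hcompat, rfl⟩ := hP.1 A hA
  obtain ⟨a, haF, haP⟩ := hP.exists_principalIdeal_mem_of_generators hcompat hA
  exact ⟨a, ⟨a, haF, nle_refl a⟩, haP⟩

lemma isProperFilter_dMap (hP : IsPrimeFilterD P) : IsProperFilter (dMap P) := by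
  have hprincipal : ∀ A ∈ P, ∃ a ∈ A, principalIdeal a ∈ P :=
    fun A hA => hP.exists_principalIdeal_mem hA
  obtain ⟨-, ⟨A, hA⟩, hzero, hup, hdir, -⟩ := hP
  refine ⟨?_, ?_, ?_, ?_⟩
  · obtain ⟨a, -, haP⟩ := hprincipal A hA
    exact ⟨a, haP⟩
  · exact fun h => hzero (principalIdeal_zero (S := S) ▸ h)
  · exact fun a ha b hab => hup _ ha _ (isFGIdeal_principalIdeal b) (principalIdeal_mono hab)
  · intro a ha b hb
    obtain ⟨C, hC, hCa, hCb⟩ := hdir _ ha _ hb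
    obtain ⟨c, hcC, hcP⟩ := hprincipal C hC
    exact ⟨c, hcP, hCa hcC, hCb hcC⟩

lemma uMap_dMap (hP : IsPrimeFilterD P) : uMap (dMap P) = P := by
  have hprincipal : ∀ A ∈ P, ∃ a ∈ A, principalIdeal a ∈ P :=
    fun A hA => hP.exists_principalIdeal_mem hA
  obtain ⟨hfg, -, -, hup, -, -⟩ := hP
  ext A
  constructor
  · rintro ⟨hA, a, haA, haP⟩
    exact hup _ haP A hA (hA.principalIdeal_subset haA)
  · intro hA
    obtain ⟨a, haA, haP⟩ := hprincipal A hA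
    exact ⟨hfg A hA, a, haA, haP⟩

end IsPrimeFilterD

namespace IsProperFilter

variable {F : Set S}

lemma isPrimeFilterD_uMap (hF : IsProperFilter F) : IsPrimeFilterD (uMap F) := by
  obtain ⟨⟨a, ha⟩, hzero, -, hdir⟩ := hF
  refine ⟨fun A hA => hA.1, ⟨_, isFGIdeal_principalIdeal a, a, self_mem_principalIdeal a, ha⟩,
    ?_, ?_, ?_, ?_⟩
  · rintro ⟨-, x, rfl, hx⟩
    exact hzero hx
  · rintro A ⟨-, x, hxA, hxF⟩ B hB hAB
    exact ⟨hB, x, hAB hxA, hxF⟩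
  · rintro A ⟨hA, a, haA, haF⟩ B ⟨hB, b, hbB, hbF⟩
    obtain ⟨c, hcF, hca, hcb⟩ := hdir a haF b hbF
    exact ⟨_, ⟨isFGIdeal_principalIdeal c, c, self_mem_principalIdeal c, hcF⟩,
      (principalIdeal_mono hca).trans (hA.principalIdeal_subset haA),
      (principalIdeal_mono hcb).trans (hB.principalIdeal_subset hbB)⟩
  · rintro A B hA hB ⟨-, x, hxA | hxB, hxF⟩
    · exact Or.inl ⟨hA, x, hxA, hxF⟩
    · exact Or.inr ⟨hB, x, hxB, hxF⟩

lemma dMap_uMap (hF : IsProperFilter F) : dMap (uMap F) = F := by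
  ext s
  constructor
  · rintro ⟨-, x, hxs, hxF⟩
    exact hF.mem_of_nle hxF hxs
  · exact fun hs => ⟨isFGIdeal_principalIdeal s, s, self_mem_principalIdeal s, hs⟩

end IsProperFilter

lemma uMap_mono {F₁ F₂ : Set S} (h : F₁ ⊆ F₂) : uMap F₁ ⊆ uMap F₂ :=
  fun _ ⟨hA, x, hxA, hxF⟩ => ⟨hA, x, hxA, h hxF⟩

lemma dMap_mono {P₁ P₂ : Set (Set S)} (h : P₁ ⊆ P₂) : dMap P₁ ⊆ dMap P₂ :=
  fun _ hs => h hs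

end WithZero

/-- `F ↦ Fᵘ` is an order isomorphism from the proper filters of `S` onto the
prime filters of `D(S)`, with inverse `P ↦ Pᵈ`. -/
theorem stmt10 {S : Type*} [InverseSemigroupWithZero S] :
    (∀ F : Set S, IsProperFilter F → IsPrimeFilterD (uMap F)) ∧
    (∀ P : Set (Set S), IsPrimeFilterD P → IsProperFilter (dMap P)) ∧
    (∀ F : Set S, IsProperFilter F → dMap (uMap F) = F) ∧
    (∀ P : Set (Set S), IsPrimeFilterD P → uMap (dMap P) = P) ∧
    ∀ F₁ F₂ : Set S, IsProperFilter F₁ → IsProperFilter F₂ →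
      (F₁ ⊆ F₂ ↔ uMap F₁ ⊆ uMap F₂) := by
  refine ⟨fun F hF => hF.isPrimeFilterD_uMap, fun P hP => hP.isProperFilter_dMap,
    fun F hF => hF.dMap_uMap, fun P hP => hP.uMap_dMap, fun F₁ F₂ hF₁ hF₂ => ⟨uMap_mono, ?_⟩⟩
  intro h
  rw [← hF₁.dMap_uMap, ← hF₂.dMap_uMap]
  exact dMap_mono h
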